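/- Let α be a real random variable with |α| ≤ B almost surely for some B < ∞, let Φ(λ) = 𝔼[ e^{α+λ}/(1+e^{α+λ}) ], and let λ = Φ^{-1} : (0,1) → ℝ be the inverse function (which exists since Φ is a strictly increasing continuous bijection from ℝ onto (0,1)). Then λ is differentiable on (0,1) with λ'(m) > 0, and there is a constant C = C(B) < ∞ such that λ'(m) ≤ C / (m(1−m)) for all m ∈ (0,1). -/

import Mathlib

/-!
Writing `σ` for the logistic sigmoid, `Φ(λ) = 𝔼 σ(α + λ)` has derivative `𝔼 σ'(α + λ)` with
`σ' = σ (1 - σ)`. Since `σ(y) ≤ e^{y-x} σ(x)` and `1 - σ(x) ≤ e^{y-x} (1 - σ(y))` for `x ≤ y`,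
the values of `σ(α + λ)` and `1 - σ(α + λ)` all lie within a factor `e^{2B}` of their means
`Φ(λ)` and `1 - Φ(λ)`, so `Φ'(λ) ≥ e^{-4B} Φ(λ) (1 - Φ(λ))`. Inverting at `λ = λ(m)` gives
`λ'(m) = 1 / Φ'(λ(m)) ≤ e^{4B} / (m (1 - m))`.
-/

noncomputable section
open MeasureTheory

/-- `Φ(λ) = 𝔼[ e^{α+λ}/(1+e^{α+λ}) ]`, the annealed density as a function of the chemical
potential `λ`. -/
def Phi {Ω : Type*} [MeasurableSpace Ω] (P : Measure Ω) (α : Ω → ℝ) (lam : ℝ) : ℝ :=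
  ∫ ω, Real.exp (α ω + lam) / (1 + Real.exp (α ω + lam)) ∂P

open Real

lemma exp_div_one_add_exp (x : ℝ) : exp x / (1 + exp x) = sigmoid x := by
  rw [sigmoid_def, exp_neg]
  field_simp
  ring

lemma sigmoid_le_exp_sub_mul {x y : ℝ} (hxy : x ≤ y) : sigmoid y ≤ exp (y - x) * sigmoid x := by
  have hexp : exp (y - x) * sigmoid x = (exp (x - y) + exp (-y))⁻¹ := by
    rw [sigmoid_def, exp_sub, exp_sub, exp_neg, exp_neg]
    field_simp
  rw [hexp, sigmoid_def]
  gcongr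
  exact exp_le_one_iff.2 (by linarith)

lemma one_sub_sigmoid_le_exp_sub_mul {x y : ℝ} (hxy : x ≤ y) :
    1 - sigmoid x ≤ exp (y - x) * (1 - sigmoid y) := by
  simpa only [← sigmoid_neg, neg_sub_neg] using sigmoid_le_exp_sub_mul (neg_le_neg hxy)

lemma exp_neg_mul_mul_one_sub_le_sigmoid_mul {a b x p : ℝ} (hax : a ≤ x) (hxb : x ≤ b)
    (hap : sigmoid a ≤ p) (hpb : p ≤ sigmoid b) :
    exp (-(2 * (b - a))) * (p * (1 - p)) ≤ sigmoid x * (1 - sigmoid x) := by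
  have hp : exp (-(b - a)) * p ≤ sigmoid x := by
    rw [exp_neg, inv_mul_le_iff₀ (exp_pos _)]
    calc p ≤ sigmoid b := hpb
      _ ≤ exp (b - a) * sigmoid a := sigmoid_le_exp_sub_mul (hax.trans hxb)
      _ ≤ exp (b - a) * sigmoid x := by gcongr
  have hq : exp (-(b - a)) * (1 - p) ≤ 1 - sigmoid x := by
    rw [exp_neg, inv_mul_le_iff₀ (exp_pos _)]
    calc 1 - p ≤ 1 - sigmoid a := by linarith
      _ ≤ exp (b - a) * (1 - sigmoid b) := one_sub_sigmoid_le_exp_sub_mul (hax.trans hxb)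
      _ ≤ exp (b - a) * (1 - sigmoid x) := by gcongr
  have hp0 : 0 ≤ p := (sigmoid_pos a).le.trans hap
  have hq0 : 0 ≤ 1 - p := by linarith [sigmoid_lt_one b]
  calc exp (-(2 * (b - a))) * (p * (1 - p))
      = (exp (-(b - a)) * p) * (exp (-(b - a)) * (1 - p)) := by
        rw [show -(2 * (b - a)) = -(b - a) + -(b - a) by ring, exp_add]; ring
    _ ≤ sigmoid x * (1 - sigmoid x) := mul_le_mul hp hq (by positivity) (sigmoid_pos x).le

lemma norm_sigmoid_mul_one_sub_le_one (x : ℝ) : ‖sigmoid x * (1 - sigmoid x)‖ ≤ 1 := by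
  have h0 := sigmoid_pos x
  have h1 := sigmoid_lt_one x
  rw [norm_of_nonneg (by nlinarith)]
  nlinarith

section Phi

variable {Ω : Type*} [MeasurableSpace Ω] {P : Measure Ω} {α : Ω → ℝ}

def Phi' (P : Measure Ω) (α : Ω → ℝ) (lam : ℝ) : ℝ :=
  ∫ ω, sigmoid (α ω + lam) * (1 - sigmoid (α ω + lam)) ∂P

lemma Phi_eq_integral_sigmoid (P : Measure Ω) (α : Ω → ℝ) (lam : ℝ) :
    Phi P α lam = ∫ ω, sigmoid (α ω + lam) ∂P := by
  simp only [Phi, exp_div_one_add_exp]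

lemma integrable_sigmoid_comp [IsFiniteMeasure P] {f : Ω → ℝ} (hf : AEMeasurable f P) :
    Integrable (fun ω ↦ sigmoid (f ω)) P :=
  .of_bound (continuous_sigmoid.measurable.comp_aemeasurable hf).aestronglyMeasurable 1 <|
    .of_forall fun ω ↦ by simpa [abs_of_pos (sigmoid_pos _)] using sigmoid_le_one (f ω)

lemma integrable_sigmoid_mul_one_sub_comp [IsFiniteMeasure P] {f : Ω → ℝ}
    (hf : AEMeasurable f P) :
    Integrable (fun ω ↦ sigmoid (f ω) * (1 - sigmoid (f ω))) P :=
  .of_bound ((continuous_sigmoid.mul (continuous_const.sub continuous_sigmoid)).measurable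
    |>.comp_aemeasurable hf).aestronglyMeasurable 1 <|
    .of_forall fun ω ↦ norm_sigmoid_mul_one_sub_le_one (f ω)

lemma hasDerivAt_Phi [IsFiniteMeasure P] (hα : AEMeasurable α P) (lam : ℝ) :
    HasDerivAt (Phi P α) (Phi' P α lam) lam := by
  have hαl : ∀ l : ℝ, AEMeasurable (fun ω ↦ α ω + l) P := fun l ↦ hα.add_const l
  simp_rw [funext (Phi_eq_integral_sigmoid P α)]
  refine (hasDerivAt_integral_of_dominated_loc_of_deriv_le (bound := fun _ ↦ (1 : ℝ))
    (F' := fun l ω ↦ sigmoid (α ω + l) * (1 - sigmoid (α ω + l)))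
    Filter.univ_mem (.of_forall fun l ↦ (integrable_sigmoid_comp (hαl l)).aestronglyMeasurable)
    (integrable_sigmoid_comp (hαl lam))
    (integrable_sigmoid_mul_one_sub_comp (hαl lam)).aestronglyMeasurable
    (.of_forall fun ω l _ ↦ norm_sigmoid_mul_one_sub_le_one _) (integrable_const 1)
    (.of_forall fun ω l _ ↦ ?_)).2
  simpa [Function.comp_def] using
    (hasDerivAt_sigmoid (α ω + l)).comp l ((hasDerivAt_id l).const_add (α ω))

variable [IsProbabilityMeasure P]

lemma const_le_integral_of_ae_le {f : Ω → ℝ} {c : ℝ} (hf : Integrable f P)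
    (h : ∀ᵐ ω ∂P, c ≤ f ω) : c ≤ ∫ ω, f ω ∂P := by
  simpa using integral_mono_ae (integrable_const c) hf h

lemma integral_le_const_of_ae_le {f : Ω → ℝ} {c : ℝ} (hf : Integrable f P)
    (h : ∀ᵐ ω ∂P, f ω ≤ c) : ∫ ω, f ω ∂P ≤ c := by
  simpa using integral_mono_ae hf (integrable_const c) h

variable {B : ℝ}

lemma sigmoid_sub_le_Phi (hα : AEMeasurable α P) (hαB : ∀ᵐ ω ∂P, |α ω| ≤ B) (lam : ℝ) :
    sigmoid (lam - B) ≤ Phi P α lam := by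
  rw [Phi_eq_integral_sigmoid]
  refine const_le_integral_of_ae_le (integrable_sigmoid_comp (hα.add_const lam)) ?_
  filter_upwards [hαB] with ω hω
  exact sigmoid_le (by linarith [(abs_le.1 hω).1])

lemma Phi_le_sigmoid_add (hα : AEMeasurable α P) (hαB : ∀ᵐ ω ∂P, |α ω| ≤ B) (lam : ℝ) :
    Phi P α lam ≤ sigmoid (lam + B) := by
  rw [Phi_eq_integral_sigmoid]
  refine integral_le_const_of_ae_le (integrable_sigmoid_comp (hα.add_const lam)) ?_
  filter_upwards [hαB] with ω hω
  exact sigmoid_le (by linarith [(abs_le.1 hω).2])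

lemma Phi_mem_Ioo (hα : AEMeasurable α P) (hαB : ∀ᵐ ω ∂P, |α ω| ≤ B) (lam : ℝ) :
    Phi P α lam ∈ Set.Ioo 0 1 :=
  ⟨(sigmoid_pos _).trans_le (sigmoid_sub_le_Phi hα hαB lam),
    (Phi_le_sigmoid_add hα hαB lam).trans_lt (sigmoid_lt_one _)⟩

lemma exp_neg_mul_Phi_mul_le_Phi' (hα : AEMeasurable α P) (hαB : ∀ᵐ ω ∂P, |α ω| ≤ B)
    (lam : ℝ) :
    exp (-(4 * B)) * (Phi P α lam * (1 - Phi P α lam)) ≤ Phi' P α lam := by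
  refine const_le_integral_of_ae_le (integrable_sigmoid_mul_one_sub_comp (hα.add_const lam)) ?_
  filter_upwards [hαB] with ω hω
  have h := exp_neg_mul_mul_one_sub_le_sigmoid_mul (x := α ω + lam)
    (by linarith [(abs_le.1 hω).1]) (by linarith [(abs_le.1 hω).2])
    (sigmoid_sub_le_Phi hα hαB lam) (Phi_le_sigmoid_add hα hαB lam)
  rwa [show 2 * (lam + B - (lam - B)) = 4 * B by ring] at h

lemma Phi'_pos (hα : AEMeasurable α P) (hαB : ∀ᵐ ω ∂P, |α ω| ≤ B) (lam : ℝ) :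
    0 < Phi' P α lam := by
  obtain ⟨h0, h1⟩ := Phi_mem_Ioo hα hαB lam
  exact (mul_pos (exp_pos _) (mul_pos h0 (sub_pos.2 h1))).trans_le
    (exp_neg_mul_Phi_mul_le_Phi' hα hαB lam)

lemma inv_Phi'_le (hα : AEMeasurable α P) (hαB : ∀ᵐ ω ∂P, |α ω| ≤ B) (lam : ℝ) :
    (Phi' P α lam)⁻¹ ≤ exp (4 * B) / (Phi P α lam * (1 - Phi P α lam)) := by
  obtain ⟨h0, h1⟩ := Phi_mem_Ioo hα hαB lam
  rw [div_eq_mul_inv, ← inv_inv (exp (4 * B)), ← exp_neg, ← mul_inv]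
  exact inv_anti₀ (mul_pos (exp_pos _) (mul_pos h0 (sub_pos.2 h1)))
    (exp_neg_mul_Phi_mul_le_Phi' hα hαB lam)

end Phi

lemma HasDerivAt.of_strictMono_of_leftInverse {f g : ℝ → ℝ} {U : Set ℝ} {f' m : ℝ}
    (hU : IsOpen U) (hf : StrictMono f) (hfU : ∀ x, f x ∈ U) (hfg : ∀ y ∈ U, f (g y) = y)
    (hm : m ∈ U) (hderiv : HasDerivAt f f' (g m)) (hf' : f' ≠ 0) :
    HasDerivAt g f'⁻¹ m := by
  have hg_mono : StrictMonoOn g U := fun y hy z hz hyz ↦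
    hf.lt_iff_lt.1 (by rwa [hfg y hy, hfg z hz])
  have hg_surj : g '' U = Set.univ :=
    Set.eq_univ_of_forall fun x ↦ ⟨f x, hfU x, hf.injective (hfg _ (hfU x))⟩
  have hg_cont : ContinuousAt g m :=
    hg_mono.continuousAt_of_image_mem_nhds (hU.mem_nhds hm) (by simp [hg_surj])
  exact hderiv.of_local_left_inverse hg_cont hf' (Filter.eventually_of_mem (hU.mem_nhds hm) hfg)

theorem stmt_18 (Ω : Type) [MeasurableSpace Ω] (P : Measure Ω) [IsProbabilityMeasure P]
    (B : ℝ) (α : Ω → ℝ) (hαm : Measurable α) (hαB : ∀ᵐ ω ∂P, |α ω| ≤ B)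
    (lam : ℝ → ℝ) (hlam : ∀ m ∈ Set.Ioo (0 : ℝ) 1, Phi P α (lam m) = m) :
    ∃ C : ℝ, ∀ m ∈ Set.Ioo (0 : ℝ) 1,
      ∃ dm : ℝ, HasDerivAt lam dm m ∧ 0 < dm ∧ dm ≤ C / (m * (1 - m)) := by
  have hα := hαm.aemeasurable (μ := P)
  have hPhi_mono : StrictMono (Phi P α) :=
    strictMono_of_hasDerivAt_pos (hasDerivAt_Phi hα) (Phi'_pos hα hαB)
  refine ⟨exp (4 * B), fun m hm ↦ ⟨(Phi' P α (lam m))⁻¹, ?_, inv_pos.2 (Phi'_pos hα hαB _), ?_⟩⟩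
  · exact .of_strictMono_of_leftInverse isOpen_Ioo hPhi_mono (Phi_mem_Ioo hα hαB) hlam hm
      (hasDerivAt_Phi hα _) (Phi'_pos hα hαB _).ne'
  · simpa only [hlam m hm] using inv_Phi'_le hα hαB (lam m)
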